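/- Let (X₁, X₂) be bivariate standard normal with correlation ρ ∈ [−1, 1] and let μ₁, μ₂ ∈ ℝ. Write a = (μ₁+μ₂)/2 and λ = (μ₂−μ₁)/2, so (μ₁, μ₂) = (−λ+a, λ+a). Suppose R ⊆ ℝ² is a measurable region such that its intersection with each line {(−z+t, z+t) : t ∈ ℝ} (for z ∈ ℝ) is a segment {(−z+t, z+t) : t ∈ [−a*(z), a*(z)]} for some function a* : ℝ → [0, ∞]. Then for each fixed λ, the probability P((μ₁+X₁, μ₂+X₂) ∈ R) is a nonincreasing function of |a|. -/
import Mathlib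


open MeasureTheory ProbabilityTheory
open scoped ENNReal

/-- The standard normal distribution on ℝ. -/
noncomputable def stdGauss : Measure ℝ := gaussianReal 0 1

/-- Φ, the standard normal CDF. -/
noncomputable def Φ : ℝ → ℝ := fun x => cdf stdGauss x

/-- The joint law of two independent standard normals. -/
noncomputable def P2 : Measure (ℝ × ℝ) := stdGauss.prod stdGauss

/-- The law of a bivariate standard normal with correlation ρ, constructed from
two independent standard normals. -/
noncomputable def corrNoise (ρ : ℝ) : Measure (ℝ × ℝ) :=
  Measure.map (fun p : ℝ × ℝ => (p.1, ρ * p.1 + Real.sqrt (1 - ρ ^ 2) * p.2)) P2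


lemma key1 (f : ℝ → ℝ) (hc : Continuous f) (he : ∀ x, f (-x) = f x)
    (ha : ∀ x y, 0 ≤ x → x ≤ y → f y ≤ f x) (k m m' : ℝ) (hk : 0 ≤ k) (hm : 0 ≤ m)
    (hmm' : m ≤ m') :
    ∫ x in (-k-m')..(k-m'), f x ≤ ∫ x in (-k-m)..(k-m), f x := by
  have hint : ∀ a b : ℝ, IntervalIntegrable f volume a b := fun a b => hc.intervalIntegrable a b
  have e1 : (∫ x in (-k-m')..(-k-m), f x) + ∫ x in (-k-m)..(k-m), f x
      = ∫ x in (-k-m')..(k-m), f x :=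
    intervalIntegral.integral_add_adjacent_intervals (hint _ _) (hint _ _)
  have e2 : (∫ x in (-k-m')..(k-m'), f x) + ∫ x in (k-m')..(k-m), f x
      = ∫ x in (-k-m')..(k-m), f x :=
    intervalIntegral.integral_add_adjacent_intervals (hint _ _) (hint _ _)
  have e3 : ∫ x in (-k-m')..(-k-m), f x = ∫ x in (k+m)..(k+m'), f x := by
    have := intervalIntegral.integral_comp_neg (a := k+m) (b := k+m') f
    simp only [he] at this
    rw [this]; congr 1 <;> ring
  have e4 : ∫ x in (k+m)..(k+m'), f x = ∫ x in (k-m')..(k-m), f (2*k - x) := by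
    rw [intervalIntegral.integral_comp_sub_left f (2*k)]
    congr 1 <;> ring
  have e5 : ∫ x in (k-m')..(k-m), f (2*k - x) ≤ ∫ x in (k-m')..(k-m), f x := by
    apply intervalIntegral.integral_mono_on (by linarith)
      ((hc.comp (by continuity)).intervalIntegrable _ _) (hint _ _)
    intro x hx
    rcases le_or_gt 0 x with hx0 | hx0
    · exact ha x (2*k - x) hx0 (by rcases hx with ⟨_, h2⟩; linarith)
    · rw [← he x]; exact ha (-x) (2*k - x) (by linarith) (by linarith)
  linarith

lemma phi_cont : Continuous (gaussianPDFReal 0 1) := by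
  unfold gaussianPDFReal
  continuity

lemma phi_even (x : ℝ) : gaussianPDFReal 0 1 (-x) = gaussianPDFReal 0 1 x := by
  unfold gaussianPDFReal
  norm_num

lemma phi_anti : ∀ x y : ℝ, 0 ≤ x → x ≤ y →
    gaussianPDFReal 0 1 y ≤ gaussianPDFReal 0 1 x := by
  intro x y hx hxy
  unfold gaussianPDFReal
  apply mul_le_mul_of_nonneg_left _ (by positivity)
  apply Real.exp_le_exp.mpr
  norm_num
  nlinarith

lemma gauss_Icc (p q : ℝ) (hpq : p ≤ q) :
    stdGauss (Set.Icc p q) = ENNReal.ofReal (∫ x in p..q, gaussianPDFReal 0 1 x) := by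
  rw [stdGauss, gaussianReal_apply 0 one_ne_zero]
  rw [intervalIntegral.integral_of_le hpq, ← integral_Icc_eq_integral_Ioc]
  rw [ofReal_integral_eq_lintegral_ofReal
    ((integrable_gaussianPDFReal 0 1).integrableOn)
    (Filter.Eventually.of_forall fun x => gaussianPDFReal_nonneg 0 1 x)]
  rfl

lemma stdGauss_neg (s : Set ℝ) (hs : MeasurableSet s) :
    stdGauss ((fun x : ℝ => -x) ⁻¹' s) = stdGauss s := by
  have hmap : stdGauss.map (fun x : ℝ => -x) = stdGauss := by
    rw [stdGauss]
    have : (fun x : ℝ => -x) = (fun x : ℝ => (-1 : ℝ) * x) := by funext x; ring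
    rw [this, gaussianReal_map_const_mul (-1)]
    norm_num
  conv_rhs => rw [← hmap]
  rw [Measure.map_apply measurable_neg hs]

lemma absSet_meas (σ c r : ℝ) : MeasurableSet {x : ℝ | |c + σ * x| ≤ r} :=
  (isClosed_le (by continuity) continuous_const).measurableSet

lemma refl_meas (σ c r : ℝ) :
    stdGauss {x : ℝ | |(-c) + σ * x| ≤ r} = stdGauss {x : ℝ | |c + σ * x| ≤ r} := by
  have hset : {x : ℝ | |(-c) + σ * x| ≤ r}
      = (fun x : ℝ => -x) ⁻¹' {x : ℝ | |c + σ * x| ≤ r} := by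
    ext x
    simp only [Set.mem_preimage, Set.mem_setOf_eq]
    rw [show c + σ * (-x) = -((-c) + σ * x) by ring, abs_neg]
  rw [hset, stdGauss_neg _ (absSet_meas σ c r)]

lemma oneDpos (σ r b b' : ℝ) (hσ : 0 < σ) (hr : 0 ≤ r) (hb : 0 ≤ b) (hbb : b ≤ b') :
    stdGauss {x : ℝ | |b' + σ * x| ≤ r} ≤ stdGauss {x : ℝ | |b + σ * x| ≤ r} := by
  have hset : ∀ c : ℝ, {x : ℝ | |c + σ * x| ≤ r} = Set.Icc ((-r-c)/σ) ((r-c)/σ) := by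
    intro c
    ext x
    have hcomm : σ * x = x * σ := mul_comm σ x
    simp only [Set.mem_setOf_eq, Set.mem_Icc, abs_le]
    constructor
    · rintro ⟨h1, h2⟩
      exact ⟨by rw [div_le_iff₀ hσ]; linarith, by rw [le_div_iff₀ hσ]; linarith⟩
    · rintro ⟨h1, h2⟩
      rw [div_le_iff₀ hσ] at h1
      rw [le_div_iff₀ hσ] at h2
      constructor <;> linarith
  have hle : ∀ c : ℝ, (-r-c)/σ ≤ (r-c)/σ := fun c =>
    (div_le_div_iff_of_pos_right hσ).mpr (by linarith)
  rw [hset, hset, gauss_Icc _ _ (hle b), gauss_Icc _ _ (hle b')]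
  apply ENNReal.ofReal_le_ofReal
  have e1 : (-r-b')/σ = -(r/σ) - b'/σ := by ring
  have e2 : (r-b')/σ = r/σ - b'/σ := by ring
  have e3 : (-r-b)/σ = -(r/σ) - b/σ := by ring
  have e4 : (r-b)/σ = r/σ - b/σ := by ring
  rw [e1, e2, e3, e4]
  exact key1 _ phi_cont phi_even phi_anti (r/σ) (b/σ) (b'/σ)
    (by positivity) (by positivity) ((div_le_div_iff_of_pos_right hσ).mpr hbb)

lemma abs_meas_eq (σ c r : ℝ) :
    stdGauss {x : ℝ | |c + σ * x| ≤ r} = stdGauss {x : ℝ | |abs c + σ * x| ≤ r} := by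
  rcases abs_choice c with hc | hc
  · rw [hc]
  · rw [hc]; exact (refl_meas σ c r).symm

lemma oneD (σ : ℝ) (c : ℝ≥0∞) (a a' : ℝ) (h : |a| ≤ |a'|) :
    stdGauss {x : ℝ | ENNReal.ofReal |a' + σ * x| ≤ c}
      ≤ stdGauss {x : ℝ | ENNReal.ofReal |a + σ * x| ≤ c} := by
  rcases eq_or_ne c ⊤ with hc | hc
  · subst hc
    simp [le_top]
  · have hrw : ∀ t : ℝ, (ENNReal.ofReal |t| ≤ c ↔ |t| ≤ c.toReal) := fun t =>
      ENNReal.ofReal_le_iff_le_toReal hc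
    simp only [hrw]
    set r := c.toReal with hrdef
    have hr : 0 ≤ r := ENNReal.toReal_nonneg
    -- reduce to σ ≥ 0
    rcases lt_trichotomy σ 0 with hσ | hσ | hσ
    · have hs : ∀ b : ℝ, {x : ℝ | |b + σ * x| ≤ r} = {x : ℝ | |(-b) + (-σ) * x| ≤ r} := by
        intro b; ext x; simp only [Set.mem_setOf_eq]
        rw [show (-b) + (-σ) * x = -(b + σ * x) by ring, abs_neg]
      rw [hs a, hs a']
      rw [abs_meas_eq (-σ) (-a) r, abs_meas_eq (-σ) (-a') r]
      rw [abs_neg, abs_neg]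
      exact oneDpos (-σ) r |a| |a'| (by linarith) hr (abs_nonneg a) h
    · subst hσ
      apply measure_mono
      intro x hx
      simp only [Set.mem_setOf_eq, zero_mul, add_zero] at hx ⊢
      calc |a| ≤ |a'| := h
        _ ≤ r := hx
    · rw [abs_meas_eq σ a r, abs_meas_eq σ a' r]
      exact oneDpos σ r |a| |a'| hσ hr (abs_nonneg a) h

instance : IsProbabilityMeasure stdGauss := by unfold stdGauss; infer_instance
instance : Measure.IsAddHaarMeasure (volume : Measure (ℝ × ℝ)) := by
  rw [Measure.volume_eq_prod]; infer_instance

noncomputable def G2 : ℝ × ℝ → ℝ≥0∞ := fun q => gaussianPDF 0 1 q.1 * gaussianPDF 0 1 q.2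

lemma G2_meas : Measurable G2 :=
  ((measurable_gaussianPDF 0 1).comp measurable_fst).mul
    ((measurable_gaussianPDF 0 1).comp measurable_snd)

lemma P2_eq : P2 = (volume : Measure (ℝ × ℝ)).withDensity G2 := by
  rw [P2]
  refine Measure.prod_eq fun s t hs ht => ?_
  rw [withDensity_apply _ (hs.prod ht), Measure.volume_eq_prod, ← Measure.prod_restrict]
  simp only [G2]
  rw [lintegral_prod_mul ((measurable_gaussianPDF 0 1).aemeasurable)
      ((measurable_gaussianPDF 0 1).aemeasurable)]
  rw [stdGauss, gaussianReal_apply 0 one_ne_zero s, gaussianReal_apply 0 one_ne_zero t]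

lemma phi_mul (u v x y : ℝ) (h : u^2 + v^2 = x^2 + y^2) :
    gaussianPDFReal 0 1 u * gaussianPDFReal 0 1 v
      = gaussianPDFReal 0 1 x * gaussianPDFReal 0 1 y := by
  unfold gaussianPDFReal
  push_cast
  simp only [sub_zero, mul_one]
  have e : Real.exp (-u^2/2) * Real.exp (-v^2/2)
      = Real.exp (-x^2/2) * Real.exp (-y^2/2) := by
    rw [← Real.exp_add, ← Real.exp_add]
    congr 1
    linarith
  linear_combination ((Real.sqrt (2*Real.pi))⁻¹)^2 * e

lemma rot_inv (A B C D : ℝ) (h1 : A^2 + C^2 = 1) (h2 : B^2 + D^2 = 1) (h3 : A*B + C*D = 0)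
    (hdet : |A*D - B*C| = 1) :
    P2.map (fun q : ℝ × ℝ => (A*q.1 + B*q.2, C*q.1 + D*q.2)) = P2 := by
  set F : ℝ × ℝ → ℝ × ℝ := fun q => (A*q.1 + B*q.2, C*q.1 + D*q.2) with hF
  have hFcont : Continuous F := by fun_prop
  have hFmeas : Measurable F := hFcont.measurable
  set L := Matrix.toLin (Module.Basis.finTwoProd ℝ) (Module.Basis.finTwoProd ℝ) !![A, B; C, D] with hLdef
  have hLfun : ⇑L = F := by
    funext q
    rw [hLdef, Matrix.toLin_finTwoProd_apply]
  have hLdet : LinearMap.det L = A*D - B*C := by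
    rw [hLdef, LinearMap.det_toLin, Matrix.det_fin_two_of]
  have hdetne : LinearMap.det L ≠ 0 := by
    rw [hLdet]; intro h0; rw [h0] at hdet; simp at hdet
  have hvol : Measure.map F (volume : Measure (ℝ × ℝ)) = volume := by
    rw [← hLfun, Measure.map_linearMap_addHaar_eq_smul_addHaar _ hdetne, hLdet,
      abs_inv, hdet, inv_one, ENNReal.ofReal_one, one_smul]
  have hG : ∀ q : ℝ × ℝ, G2 (F q) = G2 q := by
    intro q
    have hsq : (A*q.1 + B*q.2)^2 + (C*q.1 + D*q.2)^2 = q.1^2 + q.2^2 := by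
      linear_combination q.1^2 * h1 + q.2^2 * h2 + (2*q.1*q.2) * h3
    unfold G2 gaussianPDF
    rw [← ENNReal.ofReal_mul (gaussianPDFReal_nonneg 0 1 _),
        ← ENNReal.ofReal_mul (gaussianPDFReal_nonneg 0 1 _)]
    exact congrArg ENNReal.ofReal (phi_mul _ _ _ _ hsq)
  rw [P2_eq]
  ext s hs
  rw [Measure.map_apply hFmeas hs, withDensity_apply _ (hFmeas hs), withDensity_apply _ hs]
  conv_rhs => rw [← hvol]
  rw [setLIntegral_map hs G2_meas hFmeas]
  exact lintegral_congr fun x => (hG x).symm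

instance : IsProbabilityMeasure stdGauss := by unfold stdGauss; infer_instance

/-- Lemma A.1: if each intersection of R with an ascending 45° line
{(−z+t, z+t) : t ∈ ℝ} is a segment [−a*(z), a*(z)] (in t) centered at the
descending 45° line, then for fixed λ the probability that (μ₁+X₁, μ₂+X₂) ∈ R,
where (μ₁, μ₂) = (−λ+a, λ+a), is nonincreasing in |a|. -/
theorem stmt16 (ρ : ℝ) (hρ : ρ ∈ Set.Icc (-1:ℝ) 1)
    (R : Set (ℝ × ℝ)) (hR : MeasurableSet R)
    (astar : ℝ → ℝ≥0∞)
    (hslice : ∀ z t : ℝ, ((-z + t, z + t) ∈ R ↔ ENNReal.ofReal |t| ≤ astar z))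
    (lam : ℝ) (a a' : ℝ) (h : |a| ≤ |a'|) :
    corrNoise ρ {p : ℝ × ℝ | (-lam + a' + p.1, lam + a' + p.2) ∈ R}
      ≤ corrNoise ρ {p : ℝ × ℝ | (-lam + a + p.1, lam + a + p.2) ∈ R} := by
  obtain ⟨hρ1, hρ2⟩ := hρ
  set σu : ℝ := Real.sqrt ((1+ρ)/2) with hσu
  set σw : ℝ := Real.sqrt ((1-ρ)/2) with hσw
  have hu2 : σu^2 = (1+ρ)/2 := Real.sq_sqrt (by linarith)
  have hw2 : σw^2 = (1-ρ)/2 := Real.sq_sqrt (by linarith)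
  have hsum : σu^2 + σw^2 = 1 := by rw [hu2, hw2]; ring
  have huw : 2 * (σu * σw) = Real.sqrt (1 - ρ ^ 2) := by
    rw [hσu, hσw, ← Real.sqrt_mul (by linarith)]
    rw [show (1+ρ)/2 * ((1-ρ)/2) = (1-ρ^2) * (1/2)^2 by ring,
      Real.sqrt_mul (by nlinarith) ((1/2:ℝ)^2), Real.sqrt_sq (by norm_num)]
    ring
  set F : ℝ × ℝ → ℝ × ℝ := fun q => ((-σw)*q.1 + σu*q.2, σu*q.1 + σw*q.2) with hFdef
  have hFmeas : Measurable F := by rw [hFdef]; fun_prop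
  have hrot : P2.map F = P2 := by
    refine rot_inv (-σw) σu σu σw ?_ hsum (by ring) ?_
    · linear_combination hsum
    · rw [show (-σw)*σw - σu*σu = -(1:ℝ) by linear_combination -hsum]
      norm_num
  have hNmeas : Measurable (fun p : ℝ × ℝ => (p.1, ρ * p.1 + Real.sqrt (1 - ρ ^ 2) * p.2)) := by
    fun_prop
  have hEmeas : ∀ α : ℝ, MeasurableSet {p : ℝ × ℝ | (-lam + α + p.1, lam + α + p.2) ∈ R} := by
    intro α
    exact (show Measurable fun p : ℝ × ℝ => (-lam + α + p.1, lam + α + p.2) by fun_prop) hR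
  set Sm : ℝ → ℝ × ℝ → ℝ × ℝ := fun α q =>
    (-(lam + σw * q.1) + (α + σu * q.2), (lam + σw * q.1) + (α + σu * q.2)) with hSm
  have hSmeas : ∀ α, Measurable (Sm α) := by intro α; rw [hSm]; fun_prop
  have hkey : ∀ α : ℝ,
      (fun p : ℝ × ℝ => (p.1, ρ * p.1 + Real.sqrt (1 - ρ ^ 2) * p.2))
          ⁻¹' {p : ℝ × ℝ | (-lam + α + p.1, lam + α + p.2) ∈ R}
        = F ⁻¹' (Sm α ⁻¹' R) := by
    intro α
    ext q
    simp only [Set.mem_preimage, Set.mem_setOf_eq, hSm, hFdef]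
    have h1' : -lam + α + q.1
        = -(lam + σw * ((-σw)*q.1 + σu*q.2)) + (α + σu * (σu*q.1 + σw*q.2)) := by
      linear_combination (-q.1) * hsum
    have h2' : lam + α + (ρ * q.1 + Real.sqrt (1 - ρ ^ 2) * q.2)
        = (lam + σw * ((-σw)*q.1 + σu*q.2)) + (α + σu * (σu*q.1 + σw*q.2)) := by
      linear_combination (-q.1) * hu2 + q.1 * hw2 + (-q.2) * huw
    rw [h1', h2']
  have hmain : ∀ α : ℝ, corrNoise ρ {p : ℝ × ℝ | (-lam + α + p.1, lam + α + p.2) ∈ R}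
      = ∫⁻ x, stdGauss {y : ℝ | ENNReal.ofReal |α + σu * y| ≤ astar (lam + σw * x)} ∂stdGauss := by
    intro α
    rw [corrNoise, Measure.map_apply hNmeas (hEmeas α), hkey α,
      ← Measure.map_apply hFmeas ((hSmeas α) hR), hrot, P2,
      Measure.prod_apply ((hSmeas α) hR)]
    refine lintegral_congr fun x => ?_
    congr 1
    ext y
    simp only [Set.mem_preimage, Set.mem_setOf_eq, hSm]
    exact hslice (lam + σw * x) (α + σu * y)
  rw [hmain a, hmain a']
  exact lintegral_mono fun x => oneD σu (astar (lam + σw * x)) a a' h
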